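/- In the four-node ADT deterministic two-way function-multicast network with forward parameters (m,n) = (i, 2i) and backward parameters (m̃,ñ) = (j, 2j), for positive integers i, j with i/3 ≤ j, the rate pair (R, R̃) = ((4/3)i, j − (1/3)i) belongs to the capacity region 𝒞. -/

import Mathlib

open Matrix Filter

namespace TwoWay

/-- The `q × q` shift matrix over `𝔽₂`: entry `(i,j)` is `1` iff `i = j + 1`. -/
def shiftG (q : ℕ) : Matrix (Fin q) (Fin q) (ZMod 2) :=
  Matrix.of fun i j => if (i : ℕ) = (j : ℕ) + 1 then 1 else 0

/-- Outputs of a symmetric ADT deterministic channel pair with direct-link level `n`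
and cross-link level `m`: given inputs `x₁, x₂ ∈ 𝔽₂^{max m n}` it returns
`(Y₁, Y₂) = (G^{q-n} x₁ + G^{q-m} x₂, G^{q-m} x₁ + G^{q-n} x₂)` where `q = max m n`. -/
def chOut (m n : ℕ) (x1 x2 : Fin (max m n) → ZMod 2) :
    (Fin (max m n) → ZMod 2) × (Fin (max m n) → ZMod 2) :=
  (shiftG (max m n) ^ (max m n - n) *ᵥ x1 + shiftG (max m n) ^ (max m n - m) *ᵥ x2,
   shiftG (max m n) ^ (max m n - m) *ᵥ x1 + shiftG (max m n) ^ (max m n - n) *ᵥ x2)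

/-- A code of block length `N` for the four-node ADT deterministic two-way
function-multicast network with forward parameters `(m, n)` and backward
parameters `(mt, nt)`.  Nodes `1, 2` carry forward sources of length `K`
(encoders `f1, f2`, taking the node's own source and its past received backward
signals); nodes `1̃, 2̃` carry backward sources of length `Kt` (encoders
`ft1, ft2`).  `dect1, dect2` are the decoders at nodes `1̃, 2̃` for the forward
modulo-2 sum, and `dec1, dec2` the decoders at nodes `1, 2` for the backward
modulo-2 sum. -/
structure Code (m n mt nt : ℕ) where
  N : ℕ
  Npos : 0 < N
  K : ℕ
  Kt : ℕ
  f1 : (i : ℕ) → (Fin K → ZMod 2) → (Fin i → (Fin (max mt nt) → ZMod 2)) →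
    (Fin (max m n) → ZMod 2)
  f2 : (i : ℕ) → (Fin K → ZMod 2) → (Fin i → (Fin (max mt nt) → ZMod 2)) →
    (Fin (max m n) → ZMod 2)
  ft1 : (i : ℕ) → (Fin Kt → ZMod 2) → (Fin i → (Fin (max m n) → ZMod 2)) →
    (Fin (max mt nt) → ZMod 2)
  ft2 : (i : ℕ) → (Fin Kt → ZMod 2) → (Fin i → (Fin (max m n) → ZMod 2)) →
    (Fin (max mt nt) → ZMod 2)
  dec1 : (Fin N → (Fin (max mt nt) → ZMod 2)) → (Fin Kt → ZMod 2)
  dec2 : (Fin N → (Fin (max mt nt) → ZMod 2)) → (Fin Kt → ZMod 2)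
  dect1 : (Fin N → (Fin (max m n) → ZMod 2)) → (Fin K → ZMod 2)
  dect2 : (Fin N → (Fin (max m n) → ZMod 2)) → (Fin K → ZMod 2)

variable {m n mt nt : ℕ}

/-- The tuple of transmitted signals `(X₁ᵢ, X₂ᵢ, X̃₁ᵢ, X̃₂ᵢ)` at one time instant. -/
abbrev Sig (m n mt nt : ℕ) : Type :=
  (Fin (max m n) → ZMod 2) × (Fin (max m n) → ZMod 2) ×
  (Fin (max mt nt) → ZMod 2) × (Fin (max mt nt) → ZMod 2)

/-- One time step: the four encoders applied to the sources and the past received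
signals determined by the history `h` of transmitted signals.  Node `k`'s encoder
sees `Ỹ_k^{i-1}` and node `k̃`'s encoder sees `Y_k^{i-1}`. -/
def step (C : Code m n mt nt) (s1 s2 : Fin C.K → ZMod 2) (t1 t2 : Fin C.Kt → ZMod 2)
    (i : ℕ) (h : Fin i → Sig m n mt nt) : Sig m n mt nt :=
  (C.f1 i s1 (fun j => (chOut mt nt (h j).2.2.1 (h j).2.2.2).1),
   C.f2 i s2 (fun j => (chOut mt nt (h j).2.2.1 (h j).2.2.2).2),
   C.ft1 i t1 (fun j => (chOut m n (h j).1 (h j).2.1).1),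
   C.ft2 i t2 (fun j => (chOut m n (h j).1 (h j).2.1).2))

/-- The history of transmitted signals up to (exclusive) time `i`, determined by
the sources. -/
def hist (C : Code m n mt nt) (s1 s2 : Fin C.K → ZMod 2) (t1 t2 : Fin C.Kt → ZMod 2) :
    (i : ℕ) → Fin i → Sig m n mt nt
  | 0 => Fin.elim0
  | i + 1 => Fin.snoc (hist C s1 s2 t1 t2 i) (step C s1 s2 t1 t2 i (hist C s1 s2 t1 t2 i))

/-- Node `1̃`'s received sequence `Y₁^N`. -/
def recvF1 (C : Code m n mt nt) (s1 s2 : Fin C.K → ZMod 2) (t1 t2 : Fin C.Kt → ZMod 2) :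
    Fin C.N → Fin (max m n) → ZMod 2 :=
  fun i => (chOut m n (hist C s1 s2 t1 t2 C.N i).1 (hist C s1 s2 t1 t2 C.N i).2.1).1

/-- Node `2̃`'s received sequence `Y₂^N`. -/
def recvF2 (C : Code m n mt nt) (s1 s2 : Fin C.K → ZMod 2) (t1 t2 : Fin C.Kt → ZMod 2) :
    Fin C.N → Fin (max m n) → ZMod 2 :=
  fun i => (chOut m n (hist C s1 s2 t1 t2 C.N i).1 (hist C s1 s2 t1 t2 C.N i).2.1).2

/-- Node `1`'s received sequence `Ỹ₁^N`. -/
def recvB1 (C : Code m n mt nt) (s1 s2 : Fin C.K → ZMod 2) (t1 t2 : Fin C.Kt → ZMod 2) :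
    Fin C.N → Fin (max mt nt) → ZMod 2 :=
  fun i => (chOut mt nt (hist C s1 s2 t1 t2 C.N i).2.2.1 (hist C s1 s2 t1 t2 C.N i).2.2.2).1

/-- Node `2`'s received sequence `Ỹ₂^N`. -/
def recvB2 (C : Code m n mt nt) (s1 s2 : Fin C.K → ZMod 2) (t1 t2 : Fin C.Kt → ZMod 2) :
    Fin C.N → Fin (max mt nt) → ZMod 2 :=
  fun i => (chOut mt nt (hist C s1 s2 t1 t2 C.N i).2.2.1 (hist C s1 s2 t1 t2 C.N i).2.2.2).2

/-- The space of source realizations `(S₁^K, S₂^K, S̃₁^K̃, S̃₂^K̃)`;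
the sources are i.i.d. Bernoulli(1/2), i.e. uniform on this finite space. -/
abbrev SrcSpace (C : Code m n mt nt) : Type :=
  (Fin C.K → ZMod 2) × (Fin C.K → ZMod 2) × (Fin C.Kt → ZMod 2) × (Fin C.Kt → ZMod 2)

-- Probability of an event under the uniform (i.i.d. Bernoulli(1/2)) source
-- distribution.
open Classical in
noncomputable def probOf (C : Code m n mt nt) (E : SrcSpace C → Prop) : ℝ :=
  ((Finset.univ.filter E).card : ℝ) / (Fintype.card (SrcSpace C) : ℝ)

/-- Decoding error probability at node `1̃` (forward modulo-2 sum). -/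
noncomputable def errF1 (C : Code m n mt nt) : ℝ :=
  probOf C fun ω =>
    C.dect1 (recvF1 C ω.1 ω.2.1 ω.2.2.1 ω.2.2.2) ≠ fun k => ω.1 k + ω.2.1 k

/-- Decoding error probability at node `2̃` (forward modulo-2 sum). -/
noncomputable def errF2 (C : Code m n mt nt) : ℝ :=
  probOf C fun ω =>
    C.dect2 (recvF2 C ω.1 ω.2.1 ω.2.2.1 ω.2.2.2) ≠ fun k => ω.1 k + ω.2.1 k

/-- Decoding error probability at node `1` (backward modulo-2 sum). -/
noncomputable def errB1 (C : Code m n mt nt) : ℝ :=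
  probOf C fun ω =>
    C.dec1 (recvB1 C ω.1 ω.2.1 ω.2.2.1 ω.2.2.2) ≠ fun k => ω.2.2.1 k + ω.2.2.2 k

/-- Decoding error probability at node `2` (backward modulo-2 sum). -/
noncomputable def errB2 (C : Code m n mt nt) : ℝ :=
  probOf C fun ω =>
    C.dec2 (recvB2 C ω.1 ω.2.1 ω.2.2.1 ω.2.2.2) ≠ fun k => ω.2.2.1 k + ω.2.2.2 k

/-- A rate pair `(R, R̃) = (K/N, K̃/N)` is achievable if there is a family of codes
whose block lengths tend to infinity and whose four decoding error probabilities
tend to `0`. -/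
def Achievable (m n mt nt : ℕ) (R Rt : ℝ) : Prop :=
  ∃ Cs : ℕ → Code m n mt nt,
    Tendsto (fun ν => (Cs ν).N) atTop atTop ∧
    (∀ ν, ((Cs ν).K : ℝ) / ((Cs ν).N : ℝ) = R) ∧
    (∀ ν, ((Cs ν).Kt : ℝ) / ((Cs ν).N : ℝ) = Rt) ∧
    Tendsto (fun ν => errF1 (Cs ν)) atTop (nhds 0) ∧
    Tendsto (fun ν => errF2 (Cs ν)) atTop (nhds 0) ∧
    Tendsto (fun ν => errB1 (Cs ν)) atTop (nhds 0) ∧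
    Tendsto (fun ν => errB2 (Cs ν)) atTop (nhds 0)

/-- The computation capacity region: the closure of the set of achievable rate pairs. -/
def CapacityRegion (m n mt nt : ℕ) : Set (ℝ × ℝ) :=
  closure {p : ℝ × ℝ | Achievable m n mt nt p.1 p.2}

/-- The perfect-feedback computation capacity: `n` if `m = n`, and
`(2/3) max(m,n)` otherwise (i.e. `(2/3)n` if `m < n` and `(2/3)m` if `m > n`). -/
noncomputable def Cpf (m n : ℕ) : ℝ :=
  if m = n then (n : ℝ) else (2 / 3) * (max m n : ℝ)

/-!
On the forward `(i, 2i)` channel a receiver hears its own transmitter's upper `i` levels cleanly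
and, on its lower levels, the sum of its transmitter's lower and the other transmitter's upper
levels. In each round of three slots the transmitters spend the first two slots on four fresh
`i`-level blocks each, arranged so that receiver `1̃` obtains the sums of blocks `0, 2` and
receiver `2̃` those of blocks `1, 3`, each also overhearing raw blocks of its own transmitter.
Adding the two halves of one received signal and feeding these `i` bits back lets transmitter `1`
form the sum of blocks `0, 1` and transmitter `2` that of blocks `2, 3`; sent in the third slot
two rounds later, these give each receiver its two missing sums: `4i` sums per `3` slots.

On the backward `(j, 2j)` channel the `3j` lower-level slots of a round carry the `i` feedback
bits (a node sends them on its upper levels, which land on the other node's lower levels) and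
`3j - i` backward sums (both nodes send their bit on the upper and the lower level), i.e.
`j - i/3` per slot. A code of `S` rounds carries forward data in `F ≤ S - 2` of them, so the forward
rate `(4i/3) F/S` only tends to `4i/3`: the rate pair lies in the closure of the achievable ones.
-/

lemma shiftG_mulVec_apply (q : ℕ) (x : Fin q → ZMod 2) (k : Fin q) :
    (shiftG q *ᵥ x) k = if h : 1 ≤ (k : ℕ) then x ⟨k - 1, by omega⟩ else 0 := by
  simp only [mulVec, dotProduct, shiftG, of_apply, ite_mul, one_mul, zero_mul]
  split_ifs with h
  · rw [Finset.sum_eq_single ⟨k - 1, by omega⟩ (fun b _ hb => if_neg fun e => hb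
      (Fin.ext (by simp; omega))) (by simp), if_pos (by simp; omega)]
  · exact Finset.sum_eq_zero fun b _ => if_neg (by omega)

lemma shiftG_pow_mulVec_apply (q p : ℕ) (x : Fin q → ZMod 2) (k : Fin q) :
    (shiftG q ^ p *ᵥ x) k = if h : p ≤ k then x ⟨k - p, by omega⟩ else 0 := by
  induction p generalizing x with
  | zero => simp
  | succ p ih =>
    rw [pow_succ, ← mulVec_mulVec, ih]
    split_ifs with hp hp1 hp1
    · rw [shiftG_mulVec_apply, dif_pos (by simp; omega)]; congr 1
    · rw [shiftG_mulVec_apply, dif_neg (by simp; omega)]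
    · omega
    · rfl

section Levels

variable (a : ℕ)

/-- Indices below `a` are the upper levels: `G^a` moves them onto the lower levels. -/
def pack (t b : Fin a → ZMod 2) : Fin (max a (2 * a)) → ZMod 2 :=
  fun k => if h : (k : ℕ) < a then t ⟨k, h⟩ else b ⟨k - a, by omega⟩

def upper (y : Fin (max a (2 * a)) → ZMod 2) : Fin a → ZMod 2 :=
  fun ℓ => y ⟨ℓ, by omega⟩

def lower (y : Fin (max a (2 * a)) → ZMod 2) : Fin a → ZMod 2 :=
  fun ℓ => y ⟨a + ℓ, by omega⟩

def sumHalves (y : Fin (max a (2 * a)) → ZMod 2) : Fin a → ZMod 2 :=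
  upper a y + lower a y

variable {a}

@[simp] lemma upper_pack (t b : Fin a → ZMod 2) : upper a (pack a t b) = t := by
  ext ℓ; simp [upper, pack]

@[simp] lemma lower_pack (t b : Fin a → ZMod 2) : lower a (pack a t b) = b := by
  ext ℓ; simp [lower, pack]

@[simp] lemma sumHalves_pack (t b : Fin a → ZMod 2) : sumHalves a (pack a t b) = t + b := by
  simp [sumHalves]

lemma chOut_pack (t₁ b₁ t₂ b₂ : Fin a → ZMod 2) :
    chOut a (2 * a) (pack a t₁ b₁) (pack a t₂ b₂) =
      (pack a t₁ (b₁ + t₂), pack a t₂ (t₁ + b₂)) := by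
  have h₁ : max a (2 * a) - 2 * a = 0 := by omega
  have h₂ : max a (2 * a) - a = a := by omega
  ext k <;> simp only [chOut, h₁, h₂, pow_zero, one_mulVec, Pi.add_apply,
    shiftG_pow_mulVec_apply] <;> unfold pack <;> dsimp only [Fin.val_mk] <;> split_ifs <;>
    first | omega | simp

end Levels

section Trajectory

variable (C : Code m n mt nt) (s₁ s₂ : Fin C.K → ZMod 2) (t₁ t₂ : Fin C.Kt → ZMod 2)

def traj (τ : ℕ) : Sig m n mt nt :=
  step C s₁ s₂ t₁ t₂ τ fun k : Fin τ => traj k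
termination_by τ
decreasing_by exact k.isLt

def fwdOut (τ : ℕ) : (Fin (max m n) → ZMod 2) × (Fin (max m n) → ZMod 2) :=
  chOut m n (traj C s₁ s₂ t₁ t₂ τ).1 (traj C s₁ s₂ t₁ t₂ τ).2.1

def bwdOut (τ : ℕ) : (Fin (max mt nt) → ZMod 2) × (Fin (max mt nt) → ZMod 2) :=
  chOut mt nt (traj C s₁ s₂ t₁ t₂ τ).2.2.1 (traj C s₁ s₂ t₁ t₂ τ).2.2.2

lemma traj_eq (τ : ℕ) : traj C s₁ s₂ t₁ t₂ τ =
    (C.f1 τ s₁ fun k : Fin τ => (bwdOut C s₁ s₂ t₁ t₂ k).1,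
     C.f2 τ s₂ fun k : Fin τ => (bwdOut C s₁ s₂ t₁ t₂ k).2,
     C.ft1 τ t₁ fun k : Fin τ => (fwdOut C s₁ s₂ t₁ t₂ k).1,
     C.ft2 τ t₂ fun k : Fin τ => (fwdOut C s₁ s₂ t₁ t₂ k).2) := by
  rw [traj]; rfl

lemma hist_eq_traj (T : ℕ) (k : Fin T) : hist C s₁ s₂ t₁ t₂ T k = traj C s₁ s₂ t₁ t₂ k := by
  induction T with
  | zero => exact k.elim0
  | succ T ih =>
    induction k using Fin.lastCases with
    | last => rw [hist, Fin.snoc_last, funext ih, traj]; rfl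
    | cast k => rw [hist, Fin.snoc_castSucc, ih]; rfl

lemma recvF1_eq : recvF1 C s₁ s₂ t₁ t₂ = fun τ : Fin C.N => (fwdOut C s₁ s₂ t₁ t₂ τ).1 := by
  ext τ : 1; simp only [recvF1, fwdOut, hist_eq_traj]

lemma recvF2_eq : recvF2 C s₁ s₂ t₁ t₂ = fun τ : Fin C.N => (fwdOut C s₁ s₂ t₁ t₂ τ).2 := by
  ext τ : 1; simp only [recvF2, fwdOut, hist_eq_traj]

lemma recvB1_eq : recvB1 C s₁ s₂ t₁ t₂ = fun τ : Fin C.N => (bwdOut C s₁ s₂ t₁ t₂ τ).1 := by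
  ext τ : 1; simp only [recvB1, bwdOut, hist_eq_traj]

lemma recvB2_eq : recvB2 C s₁ s₂ t₁ t₂ = fun τ : Fin C.N => (bwdOut C s₁ s₂ t₁ t₂ τ).2 := by
  ext τ : 1; simp only [recvB2, bwdOut, hist_eq_traj]

end Trajectory

section ZeroError

def Code.IsZeroError (C : Code m n mt nt) : Prop :=
  ∀ s₁ s₂ t₁ t₂,
    C.dect1 (recvF1 C s₁ s₂ t₁ t₂) = s₁ + s₂ ∧ C.dect2 (recvF2 C s₁ s₂ t₁ t₂) = s₁ + s₂ ∧
    C.dec1 (recvB1 C s₁ s₂ t₁ t₂) = t₁ + t₂ ∧ C.dec2 (recvB2 C s₁ s₂ t₁ t₂) = t₁ + t₂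

lemma probOf_eq_zero (C : Code m n mt nt) {E : SrcSpace C → Prop} (h : ∀ ω, ¬ E ω) :
    probOf C E = 0 := by
  simp [probOf, h]

variable {C : Code m n mt nt}

lemma Code.IsZeroError.errF1_eq_zero (hC : C.IsZeroError) : errF1 C = 0 :=
  probOf_eq_zero C fun _ => not_not_intro (hC _ _ _ _).1

lemma Code.IsZeroError.errF2_eq_zero (hC : C.IsZeroError) : errF2 C = 0 :=
  probOf_eq_zero C fun _ => not_not_intro (hC _ _ _ _).2.1

lemma Code.IsZeroError.errB1_eq_zero (hC : C.IsZeroError) : errB1 C = 0 :=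
  probOf_eq_zero C fun _ => not_not_intro (hC _ _ _ _).2.2.1

lemma Code.IsZeroError.errB2_eq_zero (hC : C.IsZeroError) : errB2 C = 0 :=
  probOf_eq_zero C fun _ => not_not_intro (hC _ _ _ _).2.2.2

lemma achievable_of_isZeroError {R Rt : ℝ} (Cs : ℕ → Code m n mt nt)
    (hN : Tendsto (fun ν => (Cs ν).N) atTop atTop)
    (hR : ∀ ν, ((Cs ν).K : ℝ) / ((Cs ν).N : ℝ) = R)
    (hRt : ∀ ν, ((Cs ν).Kt : ℝ) / ((Cs ν).N : ℝ) = Rt) (hC : ∀ ν, (Cs ν).IsZeroError) :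
    Achievable m n mt nt R Rt := by
  refine ⟨Cs, hN, hR, hRt, ?_, ?_, ?_, ?_⟩ <;> refine tendsto_const_nhds.congr fun ν => ?_
  exacts [(hC ν).errF1_eq_zero.symm, (hC ν).errF2_eq_zero.symm, (hC ν).errB1_eq_zero.symm,
    (hC ν).errB2_eq_zero.symm]

end ZeroError

section Sequences

variable {V : Type*} [Zero V]

def seqAt {T : ℕ} (y : Fin T → V) (τ : ℕ) : V :=
  if h : τ < T then y ⟨τ, h⟩ else 0

lemma seqAt_of_lt {T τ : ℕ} (y : ℕ → V) (h : τ < T) :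
    seqAt (fun k : Fin T => y k) τ = y τ :=
  dif_pos h

def phase (τ : ℕ) : Fin 3 := Fin.ofNat 3 τ

lemma phase_three_mul_add (r : ℕ) (ph : Fin 3) : phase (3 * r + ph) = ph :=
  Fin.ext (by simp [phase, Fin.ofNat])

end Sequences

section FeedbackCode

variable (i j F S : ℕ)

def fwdBit : (Fin 4 × Fin i) × Fin F ≃ Fin (4 * i * F) :=
  (finProdFinEquiv.prodCongr (Equiv.refl _)).trans finProdFinEquiv

def bwdBit : Fin (3 * j - i) × Fin S ≃ Fin ((3 * j - i) * S) :=
  finProdFinEquiv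

/-- The `3j` lower levels `(phase, level)` of a backward round: `i` of them carry feedback, the
others backward source bits. -/
def levelSlot (hij : i ≤ 3 * j) : Fin 3 × Fin j ≃ Fin i ⊕ Fin (3 * j - i) :=
  finProdFinEquiv.trans ((finCongr (by omega)).trans finSumFinEquiv.symm)

def srcBlock (s : Fin (4 * i * F) → ZMod 2) (b : Fin 4) (r : ℕ) : Fin i → ZMod 2 :=
  if h : r < F then fun ℓ => s (fwdBit i F ((b, ℓ), ⟨r, h⟩)) else 0

def bwdData (t : Fin ((3 * j - i) * S) → ZMod 2) (g : ℕ) : Fin (3 * j - i) → ZMod 2 :=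
  if h : g < S then fun w => t (bwdBit i j S (w, ⟨g, h⟩)) else 0

variable (hij : i ≤ 3 * j)

def feedback (z : ℕ → Fin (max j (2 * j)) → ZMod 2) (r : ℕ) : Fin i → ZMod 2 :=
  fun ℓ => let x := (levelSlot i j hij).symm (.inl ℓ); lower j (z (3 * (r + 1) + x.1)) x.2

/-- In phase `2` of round `r` the transmitters complete round `r - 2`, whose feedback came back
during round `r - 1` (for `r < 2` the slot is wasted). -/
def fwdEnc₁ (s : Fin (4 * i * F) → ZMod 2) (τ : ℕ) (z : ℕ → Fin (max j (2 * j)) → ZMod 2) :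
    Fin (max i (2 * i)) → ZMod 2 :=
  let r := τ / 3
  ![pack i (srcBlock i F s 1 r) (srcBlock i F s 0 r),
    pack i (srcBlock i F s 3 r) (srcBlock i F s 2 r),
    pack i (feedback i j hij z (r - 2) + srcBlock i F s 0 (r - 2)) 0] (phase τ)

def fwdEnc₂ (s : Fin (4 * i * F) → ZMod 2) (τ : ℕ) (z : ℕ → Fin (max j (2 * j)) → ZMod 2) :
    Fin (max i (2 * i)) → ZMod 2 :=
  let r := τ / 3
  ![pack i (srcBlock i F s 0 r) (srcBlock i F s 1 r),
    pack i (srcBlock i F s 2 r) (srcBlock i F s 3 r),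
    pack i (feedback i j hij z (r - 2) + srcBlock i F s 3 (r - 2)) 0] (phase τ)

def bwdSignal (fb : Fin i → ZMod 2) (d : Fin (3 * j - i) → ZMod 2) (ph : Fin 3) :
    Fin (max j (2 * j)) → ZMod 2 :=
  pack j (fun k => Sum.elim fb d (levelSlot i j hij (ph, k)))
    (fun k => Sum.elim 0 d (levelSlot i j hij (ph, k)))

def bwdEnc₁ (t : Fin ((3 * j - i) * S) → ZMod 2) (τ : ℕ)
    (y : ℕ → Fin (max i (2 * i)) → ZMod 2) : Fin (max j (2 * j)) → ZMod 2 :=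
  bwdSignal i j hij (sumHalves i (y (3 * (τ / 3 - 1) + 1))) (bwdData i j S t (τ / 3)) (phase τ)

def bwdEnc₂ (t : Fin ((3 * j - i) * S) → ZMod 2) (τ : ℕ)
    (y : ℕ → Fin (max i (2 * i)) → ZMod 2) : Fin (max j (2 * j)) → ZMod 2 :=
  bwdSignal i j hij (sumHalves i (y (3 * (τ / 3 - 1)))) (bwdData i j S t (τ / 3)) (phase τ)

/-- Time `3 * r + 8` is phase `2` of round `r + 2`. -/
def fwdDec₁ (y : ℕ → Fin (max i (2 * i)) → ZMod 2) (r : ℕ) : Fin 4 → Fin i → ZMod 2 :=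
  ![lower i (y (3 * r)), upper i (y (3 * r + 8)) + lower i (y (3 * r)),
    lower i (y (3 * r + 1)), lower i (y (3 * r + 8)) + lower i (y (3 * r + 1))]

def fwdDec₂ (y : ℕ → Fin (max i (2 * i)) → ZMod 2) (r : ℕ) : Fin 4 → Fin i → ZMod 2 :=
  ![lower i (y (3 * r + 8)) + lower i (y (3 * r)), lower i (y (3 * r)),
    upper i (y (3 * r + 8)) + lower i (y (3 * r + 1)), lower i (y (3 * r + 1))]

def bwdDec (z : ℕ → Fin (max j (2 * j)) → ZMod 2) (g : ℕ) (w : Fin (3 * j - i)) : ZMod 2 :=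
  let x := (levelSlot i j hij).symm (.inr w); lower j (z (3 * g + x.1)) x.2

/-- Reducible, so that `Fin (feedbackCode ..).K → ZMod 2` unifies with `Fin (4 * i * F) → ZMod 2`
under `rw`. -/
abbrev feedbackCode (hFS : F + 2 ≤ S) : Code i (2 * i) j (2 * j) where
  N := 3 * S
  Npos := by omega
  K := 4 * i * F
  Kt := (3 * j - i) * S
  f1 τ s z := fwdEnc₁ i j F hij s τ (seqAt z)
  f2 τ s z := fwdEnc₂ i j F hij s τ (seqAt z)
  ft1 τ t y := bwdEnc₁ i j S hij t τ (seqAt y)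
  ft2 τ t y := bwdEnc₂ i j S hij t τ (seqAt y)
  dec1 z m := let x := (bwdBit i j S).symm m; bwdDec i j hij (seqAt z) x.2 x.1
  dec2 z m := let x := (bwdBit i j S).symm m; bwdDec i j hij (seqAt z) x.2 x.1
  dect1 y k := let x := (fwdBit i F).symm k; fwdDec₁ i (seqAt y) x.2 x.1.1 x.1.2
  dect2 y k := let x := (fwdBit i F).symm k; fwdDec₂ i (seqAt y) x.2 x.1.1 x.1.2

variable {i j F S hij}

lemma srcBlock_add (s₁ s₂ : Fin (4 * i * F) → ZMod 2) (b : Fin 4) (r : ℕ) :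
    srcBlock i F (s₁ + s₂) b r = srcBlock i F s₁ b r + srcBlock i F s₂ b r := by
  unfold srcBlock; split_ifs <;> simp; rfl

lemma bwdData_add (t₁ t₂ : Fin ((3 * j - i) * S) → ZMod 2) (g : ℕ) :
    bwdData i j S (t₁ + t₂) g = bwdData i j S t₁ g + bwdData i j S t₂ g := by
  unfold bwdData; split_ifs <;> simp; rfl

variable (fb₁ fb₂ : Fin i → ZMod 2) (d₁ d₂ : Fin (3 * j - i) → ZMod 2) (ph : Fin 3) (k : Fin j)

lemma lower_chOut_bwdSignal_fst :
    lower j (chOut j (2 * j) (bwdSignal i j hij fb₁ d₁ ph) (bwdSignal i j hij fb₂ d₂ ph)).1 k =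
      Sum.elim fb₂ (d₁ + d₂) (levelSlot i j hij (ph, k)) := by
  simp only [bwdSignal, chOut_pack, lower_pack, Pi.add_apply]
  cases levelSlot i j hij (ph, k) <;> simp

lemma lower_chOut_bwdSignal_snd :
    lower j (chOut j (2 * j) (bwdSignal i j hij fb₁ d₁ ph) (bwdSignal i j hij fb₂ d₂ ph)).2 k =
      Sum.elim fb₁ (d₁ + d₂) (levelSlot i j hij (ph, k)) := by
  simp only [bwdSignal, chOut_pack, lower_pack, Pi.add_apply]
  cases levelSlot i j hij (ph, k) <;> simp

end FeedbackCode

section Evaluation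

variable {i j F S : ℕ} {hij : i ≤ 3 * j} {hFS : F + 2 ≤ S}
  (s₁ s₂ : Fin (4 * i * F) → ZMod 2) (t₁ t₂ : Fin ((3 * j - i) * S) → ZMod 2)

local notation "Y" => fwdOut (feedbackCode i j F S hij hFS) s₁ s₂ t₁ t₂
local notation "Ỹ" => bwdOut (feedbackCode i j F S hij hFS) s₁ s₂ t₁ t₂

lemma fwdOut_feedbackCode (τ : ℕ) :
    Y τ = chOut i (2 * i) (fwdEnc₁ i j F hij s₁ τ (seqAt fun k : Fin τ => (Ỹ k).1))
      (fwdEnc₂ i j F hij s₂ τ (seqAt fun k : Fin τ => (Ỹ k).2)) := by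
  rw [fwdOut, traj_eq]

lemma bwdOut_feedbackCode (τ : ℕ) :
    Ỹ τ = chOut j (2 * j) (bwdEnc₁ i j S hij t₁ τ (seqAt fun k : Fin τ => (Y k).1))
      (bwdEnc₂ i j S hij t₂ τ (seqAt fun k : Fin τ => (Y k).2)) := by
  rw [bwdOut, traj_eq]

lemma fwdOut_three_mul (r : ℕ) :
    Y (3 * r) = (pack i (srcBlock i F s₁ 1 r) (srcBlock i F (s₁ + s₂) 0 r),
      pack i (srcBlock i F s₂ 0 r) (srcBlock i F (s₁ + s₂) 1 r)) := by
  have hph : phase (3 * r) = 0 := Fin.ext (by simp [phase])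
  rw [fwdOut_feedbackCode, fwdEnc₁, fwdEnc₂, hph, Nat.mul_div_cancel_left r three_pos]
  simp [chOut_pack, srcBlock_add]

lemma fwdOut_three_mul_add_one (r : ℕ) :
    Y (3 * r + 1) = (pack i (srcBlock i F s₁ 3 r) (srcBlock i F (s₁ + s₂) 2 r),
      pack i (srcBlock i F s₂ 2 r) (srcBlock i F (s₁ + s₂) 3 r)) := by
  have hph : phase (3 * r + 1) = 1 := Fin.ext (by simp [phase])
  rw [fwdOut_feedbackCode, fwdEnc₁, fwdEnc₂, hph, show (3 * r + 1) / 3 = r by omega]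
  simp [chOut_pack, srcBlock_add]

lemma lower_bwdOut_of_levelSlot_eq_inr (g : ℕ) {ph : Fin 3} {k : Fin j} {w : Fin (3 * j - i)}
    (h : levelSlot i j hij (ph, k) = .inr w) :
    lower j (Ỹ (3 * g + ph)).1 k = bwdData i j S (t₁ + t₂) g w ∧
      lower j (Ỹ (3 * g + ph)).2 k = bwdData i j S (t₁ + t₂) g w := by
  rw [bwdOut_feedbackCode, bwdEnc₁, bwdEnc₂, phase_three_mul_add,
    show (3 * g + ph) / 3 = g by omega, lower_chOut_bwdSignal_fst, lower_chOut_bwdSignal_snd, h,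
    bwdData_add]
  exact ⟨rfl, rfl⟩

lemma lower_bwdOut_of_levelSlot_eq_inl (r : ℕ) {ph : Fin 3} {k : Fin j} {ℓ : Fin i}
    (h : levelSlot i j hij (ph, k) = .inl ℓ) :
    lower j (Ỹ (3 * (r + 1) + ph)).1 k = sumHalves i (Y (3 * r)).2 ℓ ∧
      lower j (Ỹ (3 * (r + 1) + ph)).2 k = sumHalves i (Y (3 * r + 1)).1 ℓ := by
  rw [bwdOut_feedbackCode, bwdEnc₁, bwdEnc₂, phase_three_mul_add,
    show (3 * (r + 1) + ph) / 3 - 1 = r by omega, lower_chOut_bwdSignal_fst,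
    lower_chOut_bwdSignal_snd, h, seqAt_of_lt (fun n => (Y n).2) (by omega),
    seqAt_of_lt (fun n => (Y n).1) (by omega)]
  exact ⟨rfl, rfl⟩

lemma feedback_bwdOut (r : ℕ) :
    feedback i j hij (seqAt fun k : Fin (3 * r + 8) => (Ỹ k).1) r = sumHalves i (Y (3 * r)).2 ∧
      feedback i j hij (seqAt fun k : Fin (3 * r + 8) => (Ỹ k).2) r =
        sumHalves i (Y (3 * r + 1)).1 := by
  have hslot (ℓ : Fin i) := (levelSlot i j hij).apply_symm_apply (.inl ℓ)
  constructor <;> ext ℓ <;> simp only [feedback]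
  · rw [seqAt_of_lt (fun n => (Ỹ n).1) (by omega)]
    exact (lower_bwdOut_of_levelSlot_eq_inl s₁ s₂ t₁ t₂ r (hslot ℓ)).1
  · rw [seqAt_of_lt (fun n => (Ỹ n).2) (by omega)]
    exact (lower_bwdOut_of_levelSlot_eq_inl s₁ s₂ t₁ t₂ r (hslot ℓ)).2

lemma fwdOut_three_mul_add_eight (r : ℕ) :
    Y (3 * r + 8) =
      (pack i (srcBlock i F (s₁ + s₂) 0 r + srcBlock i F (s₁ + s₂) 1 r)
          (srcBlock i F (s₁ + s₂) 2 r + srcBlock i F (s₁ + s₂) 3 r),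
        pack i (srcBlock i F (s₁ + s₂) 2 r + srcBlock i F (s₁ + s₂) 3 r)
          (srcBlock i F (s₁ + s₂) 0 r + srcBlock i F (s₁ + s₂) 1 r)) := by
  have hph : phase (3 * r + 8) = 2 := Fin.ext (by simp [phase])
  rw [fwdOut_feedbackCode, fwdEnc₁, fwdEnc₂, hph, show (3 * r + 8) / 3 - 2 = r by omega,
    (feedback_bwdOut s₁ s₂ t₁ t₂ r).1, (feedback_bwdOut s₁ s₂ t₁ t₂ r).2, fwdOut_three_mul,
    fwdOut_three_mul_add_one]
  simp [chOut_pack, srcBlock_add]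
  constructor <;> congr 1 <;> abel

lemma seqAt_recvF1 {τ : ℕ} (h : τ < 3 * S) :
    seqAt (recvF1 (feedbackCode i j F S hij hFS) s₁ s₂ t₁ t₂) τ = (Y τ).1 := by
  rw [recvF1_eq, seqAt_of_lt (fun n => (Y n).1) h]

lemma seqAt_recvF2 {τ : ℕ} (h : τ < 3 * S) :
    seqAt (recvF2 (feedbackCode i j F S hij hFS) s₁ s₂ t₁ t₂) τ = (Y τ).2 := by
  rw [recvF2_eq, seqAt_of_lt (fun n => (Y n).2) h]

lemma seqAt_recvB1 {τ : ℕ} (h : τ < 3 * S) :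
    seqAt (recvB1 (feedbackCode i j F S hij hFS) s₁ s₂ t₁ t₂) τ = (Ỹ τ).1 := by
  rw [recvB1_eq, seqAt_of_lt (fun n => (Ỹ n).1) h]

lemma seqAt_recvB2 {τ : ℕ} (h : τ < 3 * S) :
    seqAt (recvB2 (feedbackCode i j F S hij hFS) s₁ s₂ t₁ t₂) τ = (Ỹ τ).2 := by
  rw [recvB2_eq, seqAt_of_lt (fun n => (Ỹ n).2) h]

lemma fwdDec₁_seqAt_recvF1 {r : ℕ} (hr : r + 2 < S) :
    fwdDec₁ i (seqAt (recvF1 (feedbackCode i j F S hij hFS) s₁ s₂ t₁ t₂)) r =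
      fun b => srcBlock i F (s₁ + s₂) b r := by
  ext b : 1
  fin_cases b <;> simp [fwdDec₁, seqAt_recvF1 _ _ _ _ (show 3 * r < 3 * S by omega),
    seqAt_recvF1 _ _ _ _ (show 3 * r + 1 < 3 * S by omega),
    seqAt_recvF1 _ _ _ _ (show 3 * r + 8 < 3 * S by omega), fwdOut_three_mul,
    fwdOut_three_mul_add_one, fwdOut_three_mul_add_eight] <;>
  rw [add_right_comm, ZModModule.add_self, zero_add]

lemma fwdDec₂_seqAt_recvF2 {r : ℕ} (hr : r + 2 < S) :
    fwdDec₂ i (seqAt (recvF2 (feedbackCode i j F S hij hFS) s₁ s₂ t₁ t₂)) r =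
      fun b => srcBlock i F (s₁ + s₂) b r := by
  ext b : 1
  fin_cases b <;> simp [fwdDec₂, seqAt_recvF2 _ _ _ _ (show 3 * r < 3 * S by omega),
    seqAt_recvF2 _ _ _ _ (show 3 * r + 1 < 3 * S by omega),
    seqAt_recvF2 _ _ _ _ (show 3 * r + 8 < 3 * S by omega), fwdOut_three_mul,
    fwdOut_three_mul_add_one, fwdOut_three_mul_add_eight] <;>
  rw [add_assoc, ZModModule.add_self, add_zero]

lemma bwdDec_seqAt_recvB1 {g : ℕ} (hg : g < S) :
    bwdDec i j hij (seqAt (recvB1 (feedbackCode i j F S hij hFS) s₁ s₂ t₁ t₂)) g =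
      bwdData i j S (t₁ + t₂) g := by
  ext w
  rw [bwdDec, seqAt_recvB1 _ _ _ _ (by omega)]
  exact (lower_bwdOut_of_levelSlot_eq_inr s₁ s₂ t₁ t₂ g
    ((levelSlot i j hij).apply_symm_apply (.inr w))).1

lemma bwdDec_seqAt_recvB2 {g : ℕ} (hg : g < S) :
    bwdDec i j hij (seqAt (recvB2 (feedbackCode i j F S hij hFS) s₁ s₂ t₁ t₂)) g =
      bwdData i j S (t₁ + t₂) g := by
  ext w
  rw [bwdDec, seqAt_recvB2 _ _ _ _ (by omega)]
  exact (lower_bwdOut_of_levelSlot_eq_inr s₁ s₂ t₁ t₂ g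
    ((levelSlot i j hij).apply_symm_apply (.inr w))).2

end Evaluation

theorem feedbackCode_isZeroError {i j F S : ℕ} (hij : i ≤ 3 * j) (hFS : F + 2 ≤ S) :
    (feedbackCode i j F S hij hFS).IsZeroError := by
  intro s₁ s₂ t₁ t₂
  refine ⟨?_, ?_, ?_, ?_⟩ <;> ext k
  · obtain ⟨⟨⟨b, ℓ⟩, r⟩, rfl⟩ := (fwdBit i F).surjective k
    simp [fwdDec₁_seqAt_recvF1 s₁ s₂ t₁ t₂ (show (r : ℕ) + 2 < S by omega), srcBlock]
  · obtain ⟨⟨⟨b, ℓ⟩, r⟩, rfl⟩ := (fwdBit i F).surjective k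
    simp [fwdDec₂_seqAt_recvF2 s₁ s₂ t₁ t₂ (show (r : ℕ) + 2 < S by omega), srcBlock]
  · obtain ⟨⟨w, g⟩, rfl⟩ := (bwdBit i j S).surjective k
    simp [bwdDec_seqAt_recvB1 s₁ s₂ t₁ t₂ g.isLt, bwdData]
  · obtain ⟨⟨w, g⟩, rfl⟩ := (bwdBit i j S).surjective k
    simp [bwdDec_seqAt_recvB2 s₁ s₂ t₁ t₂ g.isLt, bwdData]

lemma achievable_feedbackCode_rates (i j P : ℕ) (hij : i ≤ 3 * j) :
    Achievable i (2 * i) j (2 * j) (4 / 3 * i * (P / (P + 2))) (j - 1 / 3 * i) := by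
  have hFS (ν : ℕ) : P * (ν + 1) + 2 ≤ (P + 2) * (ν + 1) := by nlinarith
  refine achievable_of_isZeroError
    (fun ν => feedbackCode i j (P * (ν + 1)) ((P + 2) * (ν + 1)) hij (hFS ν)) ?_ ?_ ?_
    fun ν => feedbackCode_isZeroError hij (hFS ν)
  · exact tendsto_atTop_mono (fun ν => show ν ≤ 3 * ((P + 2) * (ν + 1)) by nlinarith)
      tendsto_id
  · intro ν
    push_cast
    field_simp
  · intro ν
    push_cast [Nat.cast_sub hij]
    field_simp

end TwoWay

open TwoWay in
theorem lemma3_i_general (i j : ℕ) (hij : (i : ℝ) / 3 ≤ (j : ℝ)) :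
    ((4 / 3 * (i : ℝ), (j : ℝ) - 1 / 3 * (i : ℝ)) : ℝ × ℝ) ∈
      CapacityRegion i (2 * i) j (2 * j) := by
  have hij' : i ≤ 3 * j := by exact_mod_cast (by linarith : (i : ℝ) ≤ 3 * j)
  have hrate :
      Tendsto (fun P : ℕ => 4 / 3 * (i : ℝ) * (P / (P + 2))) atTop (nhds (4 / 3 * i)) := by
    simpa using (tendsto_natCast_div_add_atTop (2 : ℝ)).const_mul (4 / 3 * (i : ℝ))
  exact mem_closure_of_tendsto (hrate.prodMk_nhds tendsto_const_nhds)
    (Eventually.of_forall fun P => achievable_feedbackCode_rates i j P hij')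

open TwoWay in
/-- Lemma 3(i): for the pair `(m,n) = (1,2)^i = (i,2i)` and
`(m̃,ñ) = (1,2)^j = (j,2j)` with `i/3 ≤ j`, the rate pair
`((4/3)i, j - (1/3)i)` belongs to the capacity region. -/
theorem lemma3_i (i j : ℕ) (hi : 0 < i) (hj : 0 < j) (hij : (i : ℝ) / 3 ≤ (j : ℝ)) :
    ((4 / 3 * (i : ℝ), (j : ℝ) - 1 / 3 * (i : ℝ)) : ℝ × ℝ) ∈
      CapacityRegion i (2 * i) j (2 * j) :=
  lemma3_i_general i j hij
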